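/- The squeezing function of the punctured unit disk satisfies s_{Δ*}(a) = |a| for every a ∈ Δ*. -/

import Mathlib

open Set Metric

noncomputable section

/-- Inverse hyperbolic tangent. -/
def artanh (x : ℝ) : ℝ := (1/2) * Real.log ((1 + x) / (1 - x))

/-- Poincaré distance on the unit disk. -/
def poincare (a b : ℂ) : ℝ := artanh ‖(a - b) / (1 - (starRingEnd ℂ) a * b)‖

variable {E : Type*} [NormedAddCommGroup E] [NormedSpace ℂ E]

/-- The Lempert function of a domain `D`. -/
def lempert (D : Set E) (z w : E) : ℝ :=
  sInf { r | ∃ (φ : ℂ → E) (α : ℂ), DifferentiableOn ℂ φ (ball 0 1) ∧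
    MapsTo φ (ball 0 1) D ∧ φ 0 = z ∧ α ∈ ball (0:ℂ) 1 ∧ φ α = w ∧
    r = artanh ‖α‖ }

/-- The Kobayashi pseudodistance of a domain `D`, as the infimum over chains of
analytic disks of the sum of the corresponding Poincaré lengths. -/
def kobayashi (D : Set E) (z w : E) : ℝ :=
  sInf { s | ∃ (n : ℕ) (p : ℕ → E), p 0 = z ∧ p n = w ∧ (∀ i ≤ n, p i ∈ D) ∧
    s = ∑ i ∈ Finset.range n, lempert D (p i) (p (i+1)) }

/-- The Kobayashi ball of radius `r` centered at `z` in `D`. -/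
def kobayashiBall (D : Set E) (z : E) (r : ℝ) : Set E := { w ∈ D | kobayashi D z w < r }

/-- The Carathéodory pseudodistance of a domain `D`. -/
def caratheodory (D : Set E) (z w : E) : ℝ :=
  sSup { r | ∃ f : E → ℂ, DifferentiableOn ℂ f D ∧ MapsTo f D (ball 0 1) ∧
    r = poincare (f z) (f w) }

/-- The Carathéodory ball of radius `r` centered at `z` in `D`. -/
def caratheodoryBall (D : Set E) (z : E) (r : ℝ) : Set E := { w ∈ D | caratheodory D z w < r }

/-- The squeezing function of a domain `D ⊆ E` (with respect to the unit ball of `E`). -/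
def squeezing (D : Set E) (z : E) : ℝ :=
  sSup { r | ∃ f : E → E, DifferentiableOn ℂ f D ∧ InjOn f D ∧ MapsTo f D (ball 0 1) ∧
    f z = 0 ∧ ball (0:E) r ⊆ f '' D }

/-- The Fridman invariant of a domain `D ⊆ E` (with respect to the unit ball of `E`). -/
def fridman (D : Set E) (z : E) : ℝ :=
  sSup { t | ∃ r > (0:ℝ), ∃ f : E → E, DifferentiableOn ℂ f (ball 0 1) ∧
    InjOn f (ball 0 1) ∧ MapsTo f (ball 0 1) D ∧ f 0 = z ∧
    kobayashiBall D z r ⊆ f '' (ball 0 1) ∧ t = Real.tanh r }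

/-- The Fridman invariant defined via Carathéodory balls. -/
def fridmanC (D : Set E) (z : E) : ℝ :=
  sSup { t | ∃ r > (0:ℝ), ∃ f : E → E, DifferentiableOn ℂ f (ball 0 1) ∧
    InjOn f (ball 0 1) ∧ MapsTo f (ball 0 1) D ∧ f 0 = z ∧
    caratheodoryBall D z r ⊆ f '' (ball 0 1) ∧ t = Real.tanh r }

/-- A set is balanced if `λ • z ∈ D` whenever `z ∈ D` and `|λ| ≤ 1`. -/
def IsBalanced (D : Set E) : Prop := ∀ z ∈ D, ∀ l : ℂ, ‖l‖ ≤ 1 → l • z ∈ D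

/-- The Minkowski function of a (balanced) domain. -/
def minkowski (D : Set E) (z : E) : ℝ := sInf { t : ℝ | 0 < t ∧ (t⁻¹ : ℂ) • z ∈ D }

/-- `D` is homogeneous: its automorphism group acts transitively. -/
def IsHomogeneous (D : Set E) : Prop :=
  ∀ z ∈ D, ∀ w ∈ D, ∃ f g : E → E, DifferentiableOn ℂ f D ∧ DifferentiableOn ℂ g D ∧
    MapsTo f D D ∧ MapsTo g D D ∧ (∀ x ∈ D, g (f x) = x) ∧ (∀ x ∈ D, f (g x) = x) ∧ f z = w

/-- `D` is completely hyperbolic: the Kobayashi pseudodistance is a distance and every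
Kobayashi-Cauchy sequence in `D` converges (in the Kobayashi distance) to a point of `D`. -/
def IsCompletelyHyperbolic (D : Set E) : Prop :=
  (∀ z ∈ D, ∀ w ∈ D, kobayashi D z w = 0 → z = w) ∧
  (∀ u : ℕ → E, (∀ n, u n ∈ D) →
    (∀ ε > (0:ℝ), ∃ N, ∀ m ≥ N, ∀ n ≥ N, kobayashi D (u m) (u n) < ε) →
    ∃ x ∈ D, Filter.Tendsto (fun n => kobayashi D (u n) x) Filter.atTop (nhds 0))

/-- The punctured unit disk in `ℂ`. -/
def puncturedDisk : Set ℂ := ball 0 1 \ {0}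

end

open Set Metric

/-!
The Möbius involution `z ↦ (a - z) / (1 - ā z)` of the disk exchanges `0` and `a`, so it maps
`Δ*` onto `Δ \ {a}`, which contains the disk of radius `|a|`; hence `s(a) ≥ |a|`.

Conversely, let `f : Δ* → Δ` be injective with `f a = 0` and `rΔ ⊆ f(Δ*)`. By Riemann's removable
singularity theorem `f` extends holomorphically to `g : Δ → closure Δ`, and the Schwarz–Pick lemma
gives `|g 0| ≤ |a|`. By the open mapping theorem the extension `g` is still injective, so
`g 0 ∉ f(Δ*) ⊇ rΔ`, that is `r ≤ |g 0| ≤ |a|`.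
-/

open Filter Topology ComplexConjugate

theorem AnalyticAt.nhds_le_map_nhds_of_injOn {g : ℂ → ℂ} {x : ℂ} {s : Set ℂ}
    (hg : AnalyticAt ℂ g x) (hs : s ∈ 𝓝[≠] x) (hinj : InjOn g s) :
    𝓝 (g x) ≤ map g (𝓝 x) := by
  refine hg.eventually_constant_or_nhds_le_map_nhds.resolve_left fun hconst => ?_
  have hfiber : ∀ᶠ z in 𝓝[≠] x, z ∈ s ∧ g z = g x ∧ z ≠ x :=
    Eventually.and hs
      ((eventually_nhdsWithin_of_eventually_nhds hconst).and self_mem_nhdsWithin)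
  obtain ⟨y, hys, hgy, hyx⟩ := hfiber.exists
  obtain ⟨z, ⟨hzs, hgz, -⟩, hzy⟩ :=
    (hfiber.and (eventually_nhdsWithin_of_eventually_nhds (eventually_ne_nhds hyx.symm))).exists
  exact hzy (hinj hzs hys (hgz.trans hgy.symm))

theorem AnalyticOnNhd.injOn_of_injOn_diff_singleton {g : ℂ → ℂ} {U : Set ℂ} {p : ℂ}
    (hU : IsOpen U) (hg : AnalyticOnNhd ℂ g U) (hinj : InjOn g (U \ {p})) : InjOn g U := by
  by_cases hp : p ∈ U
  swap
  · rwa [sdiff_singleton_eq_self hp] at hinj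
  rw [← insert_eq_of_mem hp, ← insert_sdiff_singleton,
    injOn_insert (notMem_sdiff_of_mem (mem_singleton p))]
  refine ⟨hinj, ?_⟩
  rintro ⟨q, ⟨hqU, hqp⟩, hgq⟩
  -- By the open mapping theorem, values close to `g p = g q` are taken both near `p` and near `q`.
  obtain ⟨A, hA, B, hB, hAB⟩ := Filter.disjoint_iff.mp (disjoint_nhds_nhds.mpr (Ne.symm hqp))
  have hopen_p : 𝓝 (g p) ≤ map g (𝓝 p) :=
    (hg p hp).nhds_le_map_nhds_of_injOn (sdiff_mem_nhdsWithin_compl (hU.mem_nhds hp) _) hinj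
  have hopen_q : 𝓝 (g p) ≤ map g (𝓝 q) := hgq ▸
    (hg q hqU).nhds_le_map_nhds_of_injOn
      (mem_nhdsWithin_of_mem_nhds (sdiff_mem (hU.mem_nhds hqU) (eventually_ne_nhds hqp))) hinj
  have hcommon : ∀ᶠ w in 𝓝[≠] g p, w ∈ g '' (A ∩ U) ∧ w ∈ g '' (B ∩ U) ∧ w ≠ g p :=
    Eventually.and
      (nhdsWithin_le_nhds (hopen_p (image_mem_map (inter_mem hA (hU.mem_nhds hp)))))
      (Eventually.and
        (nhdsWithin_le_nhds (hopen_q (image_mem_map (inter_mem hB (hU.mem_nhds hqU)))))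
        self_mem_nhdsWithin)
  obtain ⟨-, ⟨u, ⟨huA, huU⟩, rfl⟩, ⟨v, ⟨hvB, hvU⟩, hvu⟩, hne⟩ := hcommon.exists
  have hup : u ≠ p := by rintro rfl; exact hne rfl
  have hvp : v ≠ p := (hAB.ne_of_mem (mem_of_mem_nhds hA) hvB).symm
  exact hAB.ne_of_mem huA hvB (hinj ⟨huU, hup⟩ ⟨hvU, hvp⟩ hvu.symm)

noncomputable def diskMobius (a z : ℂ) : ℂ := (a - z) / (1 - conj a * z)

section diskMobius

variable {a z : ℂ}

@[simp] theorem diskMobius_self (a : ℂ) : diskMobius a a = 0 := by simp [diskMobius]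

@[simp] theorem diskMobius_zero (a : ℂ) : diskMobius a 0 = a := by simp [diskMobius]

theorem normSq_one_sub_conj_mul_sub_normSq_sub (a z : ℂ) :
    Complex.normSq (1 - conj a * z) - Complex.normSq (a - z) =
      (1 - Complex.normSq a) * (1 - Complex.normSq z) := by
  simp only [Complex.normSq_apply, Complex.sub_re, Complex.sub_im, Complex.one_re,
    Complex.one_im, Complex.mul_re, Complex.mul_im, Complex.conj_re, Complex.conj_im]
  ring

theorem one_sub_conj_mul_ne_zero (ha : ‖a‖ < 1) (hz : ‖z‖ < 1) : 1 - conj a * z ≠ 0 := by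
  refine sub_ne_zero.mpr fun h => ?_
  have : ‖conj a * z‖ < 1 := by
    rw [norm_mul, Complex.norm_conj]
    nlinarith [norm_nonneg a, norm_nonneg z]
  simp [← h] at this

theorem norm_diskMobius_lt_one (ha : ‖a‖ < 1) (hz : ‖z‖ < 1) : ‖diskMobius a z‖ < 1 := by
  have hden := one_sub_conj_mul_ne_zero ha hz
  have hsq : ‖a - z‖ ^ 2 < ‖1 - conj a * z‖ ^ 2 := by
    have key := normSq_one_sub_conj_mul_sub_normSq_sub a z
    simp only [Complex.normSq_eq_norm_sq] at key
    nlinarith [mul_pos (sub_pos.mpr (pow_lt_one₀ (norm_nonneg a) ha two_ne_zero))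
      (sub_pos.mpr (pow_lt_one₀ (norm_nonneg z) hz two_ne_zero))]
  rw [diskMobius, norm_div, div_lt_one (norm_pos_iff.mpr hden)]
  exact (pow_lt_pow_iff_left₀ (norm_nonneg _) (norm_nonneg _) two_ne_zero).mp hsq

theorem mapsTo_diskMobius (ha : ‖a‖ < 1) : MapsTo (diskMobius a) (ball 0 1) (ball 0 1) :=
  fun _ hz => mem_ball_zero_iff.mpr (norm_diskMobius_lt_one ha (mem_ball_zero_iff.mp hz))

theorem diskMobius_diskMobius (ha : ‖a‖ < 1) (hz : ‖z‖ < 1) :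
    diskMobius a (diskMobius a z) = z := by
  have h1 := one_sub_conj_mul_ne_zero ha hz
  have h1' : 1 - z * conj a ≠ 0 := by rwa [mul_comm]
  have h2 := one_sub_conj_mul_ne_zero ha (norm_diskMobius_lt_one ha hz)
  rw [diskMobius, div_eq_iff h2, diskMobius]
  field_simp
  ring

theorem differentiableOn_diskMobius (ha : ‖a‖ < 1) :
    DifferentiableOn ℂ (diskMobius a) (ball 0 1) := fun _ hz =>
  ((differentiableAt_const a).sub differentiableAt_id).div
    ((differentiableAt_const 1).sub ((differentiableAt_const _).mul differentiableAt_id))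
    (one_sub_conj_mul_ne_zero ha (mem_ball_zero_iff.mp hz)) |>.differentiableWithinAt

theorem injOn_diskMobius (ha : ‖a‖ < 1) : InjOn (diskMobius a) (ball 0 1) :=
  LeftInvOn.injOn fun _ hz => diskMobius_diskMobius ha (mem_ball_zero_iff.mp hz)

theorem ball_norm_subset_image_diskMobius_puncturedDisk (ha : ‖a‖ < 1) :
    ball 0 ‖a‖ ⊆ diskMobius a '' puncturedDisk := by
  intro w hw
  have hw1 : ‖w‖ < 1 := (mem_ball_zero_iff.mp hw).trans ha
  refine ⟨diskMobius a w, ⟨mapsTo_diskMobius ha (mem_ball_zero_iff.mpr hw1), fun h0 => ?_⟩,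
    diskMobius_diskMobius ha hw1⟩
  have : w = a := by rw [← diskMobius_diskMobius ha hw1, mem_singleton_iff.mp h0, diskMobius_zero]
  simp [this] at hw

end diskMobius

theorem norm_apply_zero_le_norm_of_apply_eq_zero {g : ℂ → ℂ} {a : ℂ}
    (hg : DifferentiableOn ℂ g (ball 0 1)) (hmaps : MapsTo g (ball 0 1) (closedBall 0 1))
    (ha : ‖a‖ < 1) (hga : g a = 0) : ‖g 0‖ ≤ ‖a‖ := by
  have := Complex.norm_le_norm_of_mapsTo_ball (hg.comp (differentiableOn_diskMobius ha)
    (mapsTo_diskMobius ha)) (hmaps.comp (mapsTo_diskMobius ha)) (by simp [hga]) ha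
  simpa using this

theorem exists_extension_of_mapsTo_puncturedDisk {f : ℂ → ℂ}
    (hf : DifferentiableOn ℂ f puncturedDisk) (hmaps : MapsTo f puncturedDisk (ball 0 1)) :
    ∃ g : ℂ → ℂ, DifferentiableOn ℂ g (ball 0 1) ∧ MapsTo g (ball 0 1) (closedBall 0 1) ∧
      EqOn g f puncturedDisk := by
  set g := Function.update f 0 (limUnder (𝓝[≠] 0) f)
  have hgf : EqOn g f puncturedDisk := fun z hz => Function.update_of_ne hz.2 _ _
  have hg : DifferentiableOn ℂ g (ball 0 1) :=
    Complex.differentiableOn_update_limUnder_of_bddAbove (ball_mem_nhds _ one_pos) hf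
      ⟨1, forall_mem_image.mpr fun z hz => (mem_ball_zero_iff.mp (hmaps hz)).le⟩
  refine ⟨g, hg, fun z hz => ?_, hgf⟩
  rcases eq_or_ne z 0 with rfl | hz0
  · have hcont : Tendsto g (𝓝[≠] 0) (𝓝 (g 0)) :=
      (hg.differentiableAt (ball_mem_nhds _ one_pos)).continuousAt.continuousWithinAt
    refine isClosed_closedBall.mem_of_tendsto hcont ?_
    filter_upwards [nhdsWithin_le_nhds (ball_mem_nhds (0 : ℂ) one_pos), self_mem_nhdsWithin]
      with w hw hw0
    exact hgf ⟨hw, hw0⟩ ▸ ball_subset_closedBall (hmaps ⟨hw, hw0⟩)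
  · exact hgf ⟨hz, hz0⟩ ▸ ball_subset_closedBall (hmaps ⟨hz, hz0⟩)

theorem le_norm_of_ball_subset_image_puncturedDisk {f : ℂ → ℂ} {a : ℂ} {r : ℝ}
    (ha : a ∈ puncturedDisk) (hf : DifferentiableOn ℂ f puncturedDisk)
    (hinj : InjOn f puncturedDisk) (hmaps : MapsTo f puncturedDisk (ball 0 1)) (hfa : f a = 0)
    (hr : ball 0 r ⊆ f '' puncturedDisk) : r ≤ ‖a‖ := by
  obtain ⟨g, hg, hgmaps, hgf⟩ := exists_extension_of_mapsTo_puncturedDisk hf hmaps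
  have hg0 : ‖g 0‖ ≤ ‖a‖ :=
    norm_apply_zero_le_norm_of_apply_eq_zero hg hgmaps (mem_ball_zero_iff.mp ha.1)
      ((hgf ha).trans hfa)
  have hginj : InjOn g (ball 0 1) :=
    (hg.analyticOnNhd isOpen_ball).injOn_of_injOn_diff_singleton isOpen_ball
      (hinj.congr hgf.symm)
  by_contra! hra
  obtain ⟨z, hz, hfz⟩ := hr (mem_ball_zero_iff.mpr (hg0.trans_lt hra))
  exact hz.2 (hginj hz.1 (mem_ball_self one_pos) ((hgf hz).trans hfz))

/-- The squeezing function of the punctured unit disk satisfies `s_{Δ*}(a) = |a|`. -/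
theorem squeezing_puncturedDisk (a : ℂ) (ha : a ∈ puncturedDisk) :
    squeezing puncturedDisk a = ‖a‖ := by
  have ha1 : ‖a‖ < 1 := mem_ball_zero_iff.mp ha.1
  refine IsGreatest.csSup_eq ⟨⟨diskMobius a, (differentiableOn_diskMobius ha1).mono sdiff_subset,
    (injOn_diskMobius ha1).mono sdiff_subset, (mapsTo_diskMobius ha1).mono_left sdiff_subset,
    diskMobius_self a, ball_norm_subset_image_diskMobius_puncturedDisk ha1⟩, ?_⟩
  rintro r ⟨f, hf, hinj, hmaps, hfa, hr⟩
  exact le_norm_of_ball_subset_image_puncturedDisk ha hf hinj hmaps hfa hr
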